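/- arXiv:1702.04540 — 5 statements merged into one kernel-verified Lean document; each statement's English description precedes it below -/
import Mathlib

section
/- Let a, b be as above, let ã_h, b̃_h be symmetric bilinear forms on V_h, and let (λ̃_j^h, ũ_j^h) satisfy ã_h(ũ_j^h, v_h) = λ̃_j^h b̃_h(ũ_j^h, v_h) for all v_h ∈ V_h, with normalizations ‖u_j‖_{L²} = 1 and b̃_h(ũ_j^h, ũ_j^h) = 1, where (λ_j, u_j) is an exact eigenpair. Then ‖u_j − ũ_j^h‖_E² = λ̃_j^h − λ_j + λ_j ‖u_j − ũ_j^h‖²_{L²} + (‖ũ_j^h‖_E² − ã_h(ũ_j^h, ũ_j^h)) + λ_j (1 − ‖ũ_j^h‖²_{L²}). -/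
/-- Generalized Pythagorean eigenvalue theorem accounting for quadrature:
for an exact eigenpair (λ, u) of (a, b) and a quadrature-modified discrete
eigenpair (λ̃ʰ, ũʰ) of (ãₕ, b̃ₕ) with b(u,u) = 1 and b̃ₕ(ũʰ, ũʰ) = 1,
‖u − ũʰ‖_E² = λ̃ʰ − λ + λ‖u − ũʰ‖₀² + (‖ũʰ‖_E² − ‖ũʰ‖²_{E,h}) + λ(1 − ‖ũʰ‖₀²). -/
theorem stmt11 (H : Type*) [AddCommGroup H] [Module ℝ H]
    (a b ah bh : LinearMap.BilinForm ℝ H)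
    (hsa : ∀ w v, a w v = a v w) (hsb : ∀ w v, b w v = b v w)
    (Vh : Submodule ℝ H) (lam lamt : ℝ) (u ut : H)
    (hu : ∀ v, a u v = lam * b u v)
    (hut : ut ∈ Vh)
    (hgal : ∀ vh ∈ Vh, ah ut vh = lamt * bh ut vh)
    (hnu : b u u = 1) (hnut : bh ut ut = 1) :
    a (u - ut) (u - ut) =
      lamt - lam + lam * b (u - ut) (u - ut)
        + (a ut ut - ah ut ut) + lam * (1 - b ut ut) := by
  have h1 : ah ut ut = lamt * bh ut ut := hgal ut hut
  have h2 : a ut u = lam * b ut u := by rw [hsa ut u, hsb ut u]; exact hu ut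
  simp only [map_sub, LinearMap.sub_apply, hu, h1, h2, hnu, hnut]
  ring
end

section
/- Let f(Λ) = √(120(2 − cos Λ − cos²Λ) / (97 + 76 cos Λ + 7 cos²Λ)). Then f(Λ) = Λ + (11/120960)Λ⁷ + O(Λ⁹) as Λ → 0⁺. -/
open Real Filter Asymptotics Topology Finset Set

/-! Write `c = cos Λ`, `p(Λ) = Λ + 11Λ⁷/120960`, `N(c) = 120(2 - c - c²)` and
`D(c) = 97 + 76c + 7c²`. Replacing `cos Λ` by its Taylor polynomial of degree 8, the residual
`N(c) - p² D(c)` becomes a polynomial in `Λ` whose coefficients below `Λ¹⁰` all vanish, and the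
Taylor remainder only contributes `O(Λ¹⁰)`. Since `D(cos Λ) → 180`, this gives
`N/D - p² = O(Λ¹⁰)`, and `√g - p = (g - p²)/(√g + p)` with `√g + p ≥ Λ` loses one power of `Λ`. -/

noncomputable def cosTaylor (n : ℕ) (x : ℝ) : ℝ :=
  ∑ j ∈ range n, (-1) ^ j * x ^ (2 * j) / (2 * j).factorial

lemma continuous_cosTaylor (n : ℕ) : Continuous (cosTaylor n) := by
  unfold cosTaylor
  fun_prop

lemma taylorWithinEval_cos_zero (n : ℕ) (x : ℝ) :
    taylorWithinEval cos (2 * n) univ 0 x = cosTaylor (n + 1) x := by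
  induction n with
  | zero => simp [cosTaylor]
  | succ n ih =>
    rw [show 2 * (n + 1) = 2 * n + 1 + 1 by ring, taylorWithinEval_succ, taylorWithinEval_succ, ih,
      cosTaylor, cosTaylor, Finset.sum_range_succ _ (n + 1)]
    simp only [iteratedDerivWithin_univ, Real.iteratedDeriv_odd_cos, Real.iteratedDeriv_even_cos,
      show 2 * n + 1 + 1 = 2 * (n + 1) by ring, Pi.mul_apply, Real.sin_zero, Real.cos_zero,
      Pi.pow_apply, Pi.neg_apply, Pi.one_apply, mul_zero, add_zero, sub_zero, smul_eq_mul]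
    congr 1
    rw [show 2 * (n + 1) = 2 * n + 1 + 1 by ring, Nat.factorial_succ (2 * n + 1)]
    push_cast
    ring

lemma cos_sub_cosTaylor_isBigO (n : ℕ) :
    (fun x => cos x - cosTaylor n x) =O[𝓝 0] (fun x => x ^ (2 * n)) := by
  have h := (taylor_isLittleO_univ (f := cos) (x₀ := 0) (n := 2 * n) contDiff_cos).isBigO
  simp only [taylorWithinEval_cos_zero, sub_zero] at h
  refine (h.add (isBigO_const_mul_self (((-1) ^ n / (2 * n).factorial : ℝ)) _ _)).congr_left
    fun x => ?_
  simp only [cosTaylor, Finset.sum_range_succ]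
  ring

lemma cosTaylor_five (x : ℝ) :
    cosTaylor 5 x = 1 - x ^ 2 / 2 + x ^ 4 / 24 - x ^ 6 / 720 + x ^ 8 / 40320 := by
  simp only [cosTaylor, Finset.sum_range_succ, Finset.sum_range_zero]
  norm_num [Nat.factorial]
  ring

lemma abs_sqrt_sub_le {g p : ℝ} (hg : 0 ≤ g) (hp : 0 < p) : |√g - p| ≤ |g - p ^ 2| / p := by
  have hsum : 0 < √g + p := by positivity
  have hfactor : √g - p = (g - p ^ 2) / (√g + p) := by
    rw [eq_div_iff hsum.ne']
    linear_combination sq_sqrt hg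
  rw [hfactor, abs_div, abs_of_pos hsum]
  gcongr
  exact le_add_of_nonneg_left (sqrt_nonneg g)

lemma isBigO_sqrt_sub {α : Type*} {l : Filter α} {g p q r : α → ℝ}
    (hg : ∀ᶠ a in l, 0 ≤ g a) (hq : ∀ᶠ a in l, 0 < q a ∧ q a ≤ p a)
    (h : (fun a => g a - p a ^ 2) =O[l] (fun a => q a * r a)) :
    (fun a => √(g a) - p a) =O[l] r := by
  obtain ⟨C, hC⟩ := h.bound
  refine IsBigO.of_bound C ?_
  filter_upwards [hg, hq, hC] with a hga ⟨hqa, hqp⟩ hCa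
  rw [norm_mul, Real.norm_of_nonneg hqa.le] at hCa
  calc ‖√(g a) - p a‖ ≤ |g a - p a ^ 2| / p a := abs_sqrt_sub_le hga (hqa.trans_le hqp)
    _ ≤ |g a - p a ^ 2| / q a := by gcongr
    _ ≤ C * ‖r a‖ := by
      rw [div_le_iff₀ hqa, ← Real.norm_eq_abs]
      linarith

def o2Num (c : ℝ) : ℝ := 120 * (2 - c - c ^ 2)

def o2Den (c : ℝ) : ℝ := 97 + 76 * c + 7 * c ^ 2

noncomputable def o2Expansion (x : ℝ) : ℝ := x + 11 / 120960 * x ^ 7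

lemma o2Num_nonneg {c : ℝ} (h₁ : -2 ≤ c) (h₂ : c ≤ 1) : 0 ≤ o2Num c := by
  have hfactor : o2Num c = 120 * ((1 - c) * (2 + c)) := by unfold o2Num; ring
  rw [hfactor]
  have := mul_nonneg (sub_nonneg.2 h₂) (by linarith : (0 : ℝ) ≤ 2 + c)
  positivity

lemma o2Den_pos {c : ℝ} (h : -1 ≤ c) : 0 < o2Den c := by
  unfold o2Den
  nlinarith [mul_nonneg (by linarith : (0 : ℝ) ≤ c + 1) (by linarith : (0 : ℝ) ≤ 7 * c + 69)]

lemma o2Residual_cosTaylor_isBigO :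
    (fun x => o2Num (cosTaylor 5 x) - o2Expansion x ^ 2 * o2Den (cosTaylor 5 x))
      =O[𝓝 0] (fun x => x ^ 10) := by
  set Q : ℝ → ℝ := fun x => 19/20160 - 1/2016*x^2 + 22187/406425600*x^4 - 31/8601600*x^6
        + 3779/29262643200*x^8 - 1441/877879296000*x^10 - 5489/49161240576000*x^12
        + 1859/252829237248000*x^14 - 3509/15169754234880000*x^16
        + 121/30339508469760000*x^18 - 121/3398024948613120000*x^20
  have hQ : Q =O[𝓝 0] (fun _ => (1 : ℝ)) := (Continuous.tendsto (by fun_prop) 0).isBigO_one ℝ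
  refine ((isBigO_refl (fun x : ℝ => x ^ 10) _).mul hQ).congr (fun x => ?_) (fun x => mul_one _)
  simp only [Q, cosTaylor_five, o2Num, o2Den, o2Expansion]
  ring

lemma o2Residual_cos_isBigO :
    (fun x => o2Num (cos x) - o2Expansion x ^ 2 * o2Den (cos x)) =O[𝓝 0] (fun x => x ^ 10) := by
  set F : ℝ → ℝ := fun x => -(120 + 120 * (cosTaylor 5 x + cos x)
    + o2Expansion x ^ 2 * (76 + 7 * (cosTaylor 5 x + cos x)))
  have hF : F =O[𝓝 0] (fun _ => (1 : ℝ)) := by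
    have := continuous_cosTaylor 5
    exact (Continuous.tendsto (by simp only [F, o2Expansion]; fun_prop) 0).isBigO_one ℝ
  have hdiff : (fun x => (cos x - cosTaylor 5 x) * F x) =O[𝓝 0] (fun x => x ^ 10) :=
    ((cos_sub_cosTaylor_isBigO 5).mul hF).congr_right fun x => by ring
  refine (o2Residual_cosTaylor_isBigO.add hdiff).congr_left fun x => ?_
  simp only [F, o2Num, o2Den]
  ring

lemma o2Num_div_o2Den_cos_sub_sq_isBigO :
    (fun x => o2Num (cos x) / o2Den (cos x) - o2Expansion x ^ 2) =O[𝓝 0] (fun x => x ^ 10) := by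
  have hDen : (fun x => (o2Den (cos x))⁻¹) =O[𝓝 0] (fun _ => (1 : ℝ)) :=
    (Continuous.tendsto (Continuous.inv₀ (by unfold o2Den; fun_prop)
      fun x => (o2Den_pos (neg_one_le_cos x)).ne') 0).isBigO_one ℝ
  refine (o2Residual_cos_isBigO.mul hDen).congr (fun x => ?_) (fun x => mul_one _)
  have := (o2Den_pos (neg_one_le_cos x)).ne'
  field_simp

/-- Spectrum expansion of the optimally blended quadratic scheme O₂:
√(λ̃^{2,h}_{O₂}) h = Λ + (11/120960)Λ⁷ + O(Λ⁹) as Λ → 0⁺. -/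
theorem stmt14 :
    (fun Λ : ℝ =>
        Real.sqrt (120 * (2 - Real.cos Λ - Real.cos Λ ^ 2) /
          (97 + 76 * Real.cos Λ + 7 * Real.cos Λ ^ 2))
        - (Λ + (11/120960) * Λ^7)) =O[𝓝[>] (0:ℝ)] (fun Λ => Λ^9) := by
  have hratio := o2Num_div_o2Den_cos_sub_sq_isBigO.mono (nhdsWithin_le_nhds (s := Ioi 0))
  refine isBigO_sqrt_sub (g := fun x => o2Num (cos x) / o2Den (cos x)) (p := o2Expansion)
    (q := fun x => x) ?_ ?_ (hratio.congr_right fun x => pow_succ' x 9)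
  · exact Eventually.of_forall fun x => div_nonneg
      (o2Num_nonneg (by linarith [neg_one_le_cos x]) (cos_le_one x)) (o2Den_pos (neg_one_le_cos x)).le
  · filter_upwards [self_mem_nhdsWithin] with x (hx : 0 < x)
    exact ⟨hx, le_add_of_nonneg_right (by positivity)⟩
end

section
/- Let g(Λ) = √((40 − 20 cos Λ − 20 cos²Λ) / (16 + 13 cos Λ + cos²Λ)). Then g(Λ) = Λ + (1/1440)Λ⁵ + O(Λ⁷) as Λ → 0⁺. -/
open Real Filter Asymptotics Topology

/-!
With `c = cos Λ` and `p = Λ + Λ⁵/1440`, the squared discrete frequency `N/D` satisfies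
`N/D - p² = O(Λ⁸)`: substituting the degree-6 Taylor polynomial of `cos` (error `O(Λ⁸)`) for `c`
makes `N - D p²` a polynomial in `Λ` with no terms below degree 8, and `D` stays near `30`.
Since `√(N/D) + p ≥ Λ`, dividing `N/D - p² = (√(N/D) - p)(√(N/D) + p)` by `Λ` loses one order.
-/

open Finset Complex in
theorem Real.cos_sub_taylor_six_isBigO :
    (fun x : ℝ => Real.cos x - (1 - x ^ 2 / 2 + x ^ 4 / 24 - x ^ 6 / 720)) =O[𝓝 0]
      fun x => x ^ 8 := by
  refine IsBigO.of_bound 1 ?_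
  filter_upwards [Metric.closedBall_mem_nhds (0 : ℝ) one_pos] with x hx
  rw [Metric.mem_closedBall, dist_zero_right] at hx
  have hre : Real.cos x - (1 - x ^ 2 / 2 + x ^ 4 / 24 - x ^ 6 / 720) =
      (Complex.exp (x * I) - ∑ m ∈ range 8, (x * I) ^ m / m.factorial).re := by
    simp [sum_range_succ, exp_ofReal_mul_I_re, mul_pow, Nat.factorial, pow_succ]
    ring
  calc ‖Real.cos x - (1 - x ^ 2 / 2 + x ^ 4 / 24 - x ^ 6 / 720)‖
      ≤ ‖Complex.exp (x * I) - ∑ m ∈ range 8, (x * I) ^ m / m.factorial‖ := by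
        rw [hre, Real.norm_eq_abs]; exact abs_re_le_norm _
    _ ≤ ‖(x : ℂ) * I‖ ^ 8 * ((Nat.succ 8) * ((Nat.factorial 8) * 8 : ℝ)⁻¹) :=
        Complex.exp_bound (by simpa using hx) (by norm_num)
    _ ≤ 1 * ‖x ^ 8‖ := by
        simp only [norm_mul, Complex.norm_real, norm_I, mul_one, norm_pow, one_mul]
        exact mul_le_of_le_one_right (by positivity) (by norm_num [Nat.factorial])

theorem abs_sqrt_sub_le_abs_sub_sq_div {f p x : ℝ} (hx : 0 < x) (hxp : x ≤ p) :
    |√f - p| ≤ |f - p ^ 2| / x := by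
  rw [le_div_iff₀ hx]
  rcases le_or_gt 0 f with hf | hf
  · have hfactor : |√f - p| * (√f + p) = |f - p ^ 2| := by
      rw [← abs_of_nonneg (by linarith [Real.sqrt_nonneg f] : 0 ≤ √f + p), ← abs_mul]
      congr 1
      linear_combination Real.sq_sqrt hf
    calc |√f - p| * x ≤ |√f - p| * (√f + p) := by gcongr; linarith [Real.sqrt_nonneg f]
      _ = |f - p ^ 2| := hfactor
  · rw [Real.sqrt_eq_zero'.mpr hf.le, zero_sub, abs_neg, abs_of_pos (hx.trans_le hxp), abs_of_neg (by nlinarith)]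
    nlinarith

theorem Asymptotics.IsBigO.sqrt_sub_of_sub_sq {f p : ℝ → ℝ} {n : ℕ}
    (h : (fun x => f x - p x ^ 2) =O[𝓝[>] 0] fun x => x ^ (n + 1))
    (hp : ∀ᶠ x in 𝓝[>] 0, x ≤ p x) :
    (fun x => √(f x) - p x) =O[𝓝[>] 0] fun x => x ^ n := by
  obtain ⟨C, hC⟩ := h.bound
  refine IsBigO.of_bound C ?_
  filter_upwards [hC, hp, self_mem_nhdsWithin] with x hCx hpx (hx : 0 < x)
  rw [Real.norm_eq_abs, Real.norm_eq_abs, abs_pow, abs_of_pos hx] at hCx ⊢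
  calc |√(f x) - p x| ≤ |f x - p x ^ 2| / x := abs_sqrt_sub_le_abs_sub_sq_div hx hpx
    _ ≤ C * x ^ (n + 1) / x := by gcongr
    _ = C * x ^ n := by field_simp; ring

theorem gaussG3_numer_sub_denom_mul_sq_isBigO :
    (fun Λ : ℝ => (40 - 20 * Real.cos Λ - 20 * Real.cos Λ ^ 2)
      - (16 + 13 * Real.cos Λ + Real.cos Λ ^ 2) * (Λ + (1/1440) * Λ ^ 5) ^ 2)
      =O[𝓝 0] fun Λ => Λ ^ 8 := by
  set t : ℝ → ℝ := fun x => 1 - x ^ 2 / 2 + x ^ 4 / 24 - x ^ 6 / 720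
  set R : ℝ → ℝ := fun Λ => 1/96 - (47/23040) * Λ^2 + (139/829440) * Λ^4 - (37/5529600) * Λ^6
      + (19/99532800) * Λ^8 - (1/238878720) * Λ^10 + (1/17915904000) * Λ^12
      - (1/1074954240000) * Λ^14
  set M : ℝ → ℝ := fun Λ => -20 - 20 * (Real.cos Λ + t Λ)
      - (13 + Real.cos Λ + t Λ) * (Λ + (1/1440) * Λ ^ 5) ^ 2
  -- `Λ⁸ R Λ` is the residual at `cos Λ = t Λ`; the rest is divisible by `cos Λ - t Λ`.
  have hsplit : (fun Λ : ℝ => (40 - 20 * Real.cos Λ - 20 * Real.cos Λ ^ 2)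
      - (16 + 13 * Real.cos Λ + Real.cos Λ ^ 2) * (Λ + (1/1440) * Λ ^ 5) ^ 2)
      = fun Λ => Λ ^ 8 * R Λ + (Real.cos Λ - t Λ) * M Λ := by
    funext Λ; simp only [t, R, M]; ring
  have hR : R =O[𝓝 0] fun _ => (1 : ℝ) :=
    ((show Continuous R by fun_prop).tendsto 0).isBigO_one ℝ
  have hM : M =O[𝓝 0] fun _ => (1 : ℝ) :=
    ((show Continuous M by fun_prop).tendsto 0).isBigO_one ℝ
  rw [hsplit]
  simpa using ((isBigO_refl (fun Λ : ℝ => Λ ^ 8) _).mul hR).add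
    (Real.cos_sub_taylor_six_isBigO.mul hM)

theorem gaussG3_ratio_sub_sq_isBigO :
    (fun Λ : ℝ => (40 - 20 * Real.cos Λ - 20 * Real.cos Λ ^ 2) /
        (16 + 13 * Real.cos Λ + Real.cos Λ ^ 2) - (Λ + (1/1440) * Λ ^ 5) ^ 2)
      =O[𝓝 0] fun Λ => Λ ^ 8 := by
  have hD : ∀ Λ : ℝ, 16 + 13 * Real.cos Λ + Real.cos Λ ^ 2 ≠ 0 := fun Λ => by
    nlinarith [Real.neg_one_le_cos Λ, Real.cos_le_one Λ]
  have hinv : (fun Λ : ℝ => (16 + 13 * Real.cos Λ + Real.cos Λ ^ 2)⁻¹) =O[𝓝 0]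
      fun _ => (1 : ℝ) :=
    ((show Continuous fun Λ : ℝ => (16 + 13 * Real.cos Λ + Real.cos Λ ^ 2)⁻¹ from
      by fun_prop (disch := exact hD _)).tendsto 0).isBigO_one ℝ
  refine (gaussG3_numer_sub_denom_mul_sq_isBigO.mul hinv).congr' ?_ (by simp)
  filter_upwards with Λ
  rw [sub_mul, ← div_eq_mul_inv, ← div_eq_mul_inv, mul_div_cancel_left₀ _ (hD Λ)]

/-- Spectrum expansion for quadratic IGA with full Gauss quadrature G₃:
√(λ̃^{2,h}_{G₃}) h = Λ + (1/1440)Λ⁵ + O(Λ⁷) as Λ → 0⁺. -/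
theorem stmt15 :
    (fun Λ : ℝ =>
        Real.sqrt ((40 - 20 * Real.cos Λ - 20 * Real.cos Λ ^ 2) /
          (16 + 13 * Real.cos Λ + Real.cos Λ ^ 2))
        - (Λ + (1/1440) * Λ^5)) =O[𝓝[>] (0:ℝ)] (fun Λ => Λ^7) := by
  refine (gaussG3_ratio_sub_sq_isBigO.mono nhdsWithin_le_nhds).sqrt_sub_of_sub_sq ?_
  filter_upwards [self_mem_nhdsWithin] with Λ (hΛ : 0 < Λ)
  have := pow_pos hΛ 5
  linarith
end

section
/- Let g(Λ) = √((32 − 16 cos Λ − 16 cos²Λ) / (13 + 10 cos Λ + cos²Λ)). Then g(Λ) = Λ − (1/2880)Λ⁵ + O(Λ⁷) as Λ → 0⁺. -/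
/-!
Write `b(Λ) = Λ - Λ⁵/2880`. The Taylor polynomial of `cos` of degree 6 is accurate to `O(Λ⁸)`,
and substituting it into `32 - 16c - 16c² - b²(13 + 10c + c²)` kills every term of degree `< 8`.
Since the denominator stays `≥ 4`, the squared frequency `g²` satisfies `g² - b² = O(Λ⁸)`,
and `√a - b = (a - b²)/(√a + b)` with `b ≥ Λ/2` turns this into `g - b = O(Λ⁷)`.
-/

open Real Filter Asymptotics Topology Finset

lemma Complex.isBigO_exp_sub_sum_range {n : ℕ} (hn : 0 < n) :
    (fun z : ℂ => Complex.exp z - ∑ m ∈ range n, z ^ m / m.factorial) =O[𝓝 0]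
      (fun z => z ^ n) := by
  refine IsBigO.of_bound ((n.succ : ℝ) * (n.factorial * n : ℝ)⁻¹) ?_
  filter_upwards [Metric.closedBall_mem_nhds (0 : ℂ) one_pos] with z hz
  rw [norm_pow, mul_comm]
  exact Complex.exp_bound (by simpa using hz) hn

lemma Real.isBigO_cos_sub_taylor :
    (fun x : ℝ => cos x - (1 - x ^ 2 / 2 + x ^ 4 / 24 - x ^ 6 / 720)) =O[𝓝 0]
      (fun x => x ^ 8) := by
  have hI : Tendsto (fun x : ℝ => (x : ℂ) * Complex.I) (𝓝 0) (𝓝 0) := by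
    have : Continuous (fun x : ℝ => (x : ℂ) * Complex.I) := by fun_prop
    simpa using this.tendsto 0
  have hre : ∀ x : ℝ, cos x - (1 - x ^ 2 / 2 + x ^ 4 / 24 - x ^ 6 / 720) =
      (Complex.exp (x * Complex.I) - ∑ m ∈ range 8, ((x : ℂ) * Complex.I) ^ m / m.factorial).re := by
    intro x
    simp [sum_range_succ, Complex.exp_ofReal_mul_I_re, mul_pow, Nat.factorial,
      ← Complex.ofReal_pow]
    ring
  refine (IsBigO.of_bound 1 (Eventually.of_forall fun x => ?_)).trans
    (((Complex.isBigO_exp_sub_sum_range (n := 8) (by norm_num)).comp_tendsto hI).trans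
    (IsBigO.of_bound 1 (Eventually.of_forall fun x => ?_)))
  · rw [one_mul, Real.norm_eq_abs, hre x]
    exact Complex.abs_re_le_norm _
  · simp

/-- For `a < 0` this still holds, with the junk value `√a = 0`. -/
lemma Real.abs_sqrt_sub_le (a : ℝ) {b : ℝ} (hb : 0 < b) : |√a - b| ≤ |a - b ^ 2| / b := by
  rw [le_div_iff₀ hb]
  rcases le_or_gt 0 a with ha | ha
  · calc |√a - b| * b ≤ |√a - b| * (√a + b) := by gcongr; linarith [sqrt_nonneg a]
      _ = |a - b ^ 2| := by
        rw [← abs_of_pos (by positivity : 0 < √a + b), ← abs_mul]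
        congr 1
        linear_combination sq_sqrt ha
  · rw [sqrt_eq_zero_of_nonpos ha.le, zero_sub, abs_neg, abs_of_pos hb, abs_of_neg (by nlinarith)]
    nlinarith

lemma isBigO_sqrt_sub_of_isBigO_sub_sq {α : Type*} {l : Filter α} {a b u : α → ℝ}
    (hb : ∀ᶠ x in l, 0 < b x) (h : (fun x => a x - b x ^ 2) =O[l] (fun x => b x * u x)) :
    (fun x => √(a x) - b x) =O[l] u := by
  obtain ⟨C, hC⟩ := h.bound
  refine IsBigO.of_bound C ?_
  filter_upwards [hC, hb] with x hx hbx
  simp only [Real.norm_eq_abs, abs_mul, abs_of_pos hbx] at hx ⊢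
  calc |√(a x) - b x| ≤ |a x - b x ^ 2| / b x := Real.abs_sqrt_sub_le _ hbx
    _ ≤ C * (b x * |u x|) / b x := by gcongr
    _ = C * |u x| := by field_simp

lemma isBigO_gl3_num_sub_sq_mul_den :
    (fun x : ℝ => 32 - 16 * cos x - 16 * cos x ^ 2
      - (x - 1 / 2880 * x ^ 5) ^ 2 * (13 + 10 * cos x + cos x ^ 2)) =O[𝓝 0]
      (fun x => x ^ 8) := by
  set q : ℝ → ℝ := fun x => 1 - x ^ 2 / 2 + x ^ 4 / 24 - x ^ 6 / 720
  set R : ℝ → ℝ := fun x => 1 / 240 - 29 / 38400 * x ^ 2 + 187 / 4147200 * x ^ 4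
    + 1 / 6635520 * x ^ 6 - 73 / 995328000 * x ^ 8 + 23 / 23887872000 * x ^ 10
    + 1 / 71663616000 * x ^ 12 - 1 / 4299816960000 * x ^ 14
  set S : ℝ → ℝ := fun x => -16 - 16 * (cos x + q x)
    - (x - 1 / 2880 * x ^ 5) ^ 2 * (10 + cos x + q x)
  -- The expression is `x ^ 8 * R x` at `cos x = q x`, and `S` is its difference quotient in `cos x`.
  have hsplit : ∀ x, 32 - 16 * cos x - 16 * cos x ^ 2
      - (x - 1 / 2880 * x ^ 5) ^ 2 * (13 + 10 * cos x + cos x ^ 2)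
      = x ^ 8 * R x + (cos x - q x) * S x := fun x => by simp only [q, R, S]; ring
  have hR : R =O[𝓝 0] (fun _ => (1 : ℝ)) :=
    ((by fun_prop : Continuous R).tendsto 0).isBigO_one ℝ
  have hS : S =O[𝓝 0] (fun _ => (1 : ℝ)) :=
    ((by fun_prop : Continuous S).tendsto 0).isBigO_one ℝ
  simp only [hsplit]
  simpa using ((isBigO_refl (fun x : ℝ => x ^ 8) _).mul hR).add
    (Real.isBigO_cos_sub_taylor.mul hS)

lemma isBigO_gl3_freq_sq_sub_sq :
    (fun x : ℝ => (32 - 16 * cos x - 16 * cos x ^ 2) / (13 + 10 * cos x + cos x ^ 2)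
      - (x - 1 / 2880 * x ^ 5) ^ 2) =O[𝓝 0] (fun x => x ^ 8) := by
  refine IsBigO.trans (IsBigO.of_bound (1 / 4) (Eventually.of_forall fun x => ?_))
    isBigO_gl3_num_sub_sq_mul_den
  set d := 13 + 10 * cos x + cos x ^ 2
  have hd : 4 ≤ d := by nlinarith [neg_one_le_cos x]
  set F := 32 - 16 * cos x - 16 * cos x ^ 2 - (x - 1 / 2880 * x ^ 5) ^ 2 * d
  have hratio : (32 - 16 * cos x - 16 * cos x ^ 2) / d - (x - 1 / 2880 * x ^ 5) ^ 2 = F / d := by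
    field_simp
    simp only [F]
    ring
  rw [hratio, norm_div, Real.norm_of_nonneg (r := d) (by linarith), div_le_iff₀ (by linarith)]
  nlinarith [norm_nonneg F]

lemma isBigO_pow_eight_sub_mul_pow_seven :
    (fun x : ℝ => x ^ 8) =O[𝓝 0] (fun x => (x - 1 / 2880 * x ^ 5) * x ^ 7) := by
  refine IsBigO.of_bound 2 ?_
  filter_upwards [Icc_mem_nhds (show (-1 : ℝ) < 0 by norm_num) one_pos] with x ⟨hx1, hx2⟩
  have h2 : x ^ 2 ≤ 1 := by nlinarith
  have h4 : x ^ 4 ≤ 1 := by nlinarith [sq_nonneg x]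
  rw [show (x - 1 / 2880 * x ^ 5) * x ^ 7 = x ^ 8 * (1 - x ^ 4 / 2880) by ring, norm_mul,
    Real.norm_of_nonneg (r := 1 - x ^ 4 / 2880) (by linarith)]
  nlinarith [norm_nonneg (x ^ 8)]

lemma eventually_pos_sub_pow_five :
    ∀ᶠ x in 𝓝[>] (0 : ℝ), 0 < x - 1 / 2880 * x ^ 5 := by
  filter_upwards [Ioo_mem_nhdsGT (show (0 : ℝ) < 1 by norm_num)] with x ⟨h0, h1⟩
  have h4 : x ^ 4 < 1 := pow_lt_one₀ h0.le h1 (by norm_num)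
  nlinarith

/-- Spectrum expansion for quadratic IGA with the Gauss–Lobatto rule GL₃:
√(λ̃^{2,h}_{GL₃}) h = Λ − (1/2880)Λ⁵ + O(Λ⁷) as Λ → 0⁺. -/
theorem stmt16 :
    (fun Λ : ℝ =>
        Real.sqrt ((32 - 16 * Real.cos Λ - 16 * Real.cos Λ ^ 2) /
          (13 + 10 * Real.cos Λ + Real.cos Λ ^ 2))
        - (Λ - (1/2880) * Λ^5)) =O[𝓝[>] (0:ℝ)] (fun Λ => Λ^7) :=
  isBigO_sqrt_sub_of_isBigO_sub_sq eventually_pos_sub_pow_five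
    ((isBigO_gl3_freq_sq_sub_sq.trans isBigO_pow_eight_sub_mul_pow_seven).mono nhdsWithin_le_nhds)
end

section
/- Suppose ‖u − ũ‖_E² = O(h^{2p+2}) + R², where R = R(λ̃, ũ) ≥ 0 satisfies R²/h^{2p} → C₀ > 0 as h → 0. Then there exists ρ = O(h²) with 0 < ρ < 1 such that (1 − ρ)R ≤ ‖u − ũ‖_E ≤ (1 + ρ)R for all sufficiently small h; in particular the effectivity index R / ‖u − ũ‖_E converges to 1 at rate O(h²). -/
open Filter Asymptotics Topology

/-!
Since `E² - R² = (E - R)(E + R)` and `E + R ≥ R`, the bound `|E² - R²| = O(h^{2p+2})` gives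
`|E - R| ≤ |E² - R²| / R`, and because `R² ≍ h^{2p}` this is `O(h²) · R`. The factor
`ρ(h) = c h²` is then the effectivity bound, and once `ρ ≤ 1/2` it also controls `R / E - 1`.
-/

lemma abs_sub_le_of_abs_sq_sub_sq_le {x y ε : ℝ} (hx : 0 ≤ x) (hy : 0 < y)
    (h : |x ^ 2 - y ^ 2| ≤ ε * y ^ 2) : |x - y| ≤ ε * y := by
  have hfactor : |x ^ 2 - y ^ 2| = |x - y| * (x + y) := by
    rw [← abs_of_nonneg (by linarith : 0 ≤ x + y), ← abs_mul]
    ring_nf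
  refine le_of_mul_le_mul_right ?_ hy
  calc |x - y| * y ≤ |x - y| * (x + y) := by gcongr; linarith
    _ ≤ ε * y * y := by nlinarith

lemma abs_div_sub_one_le_two_mul {x y ε : ℝ} (hy : 0 < y) (hε : ε ≤ 1 / 2)
    (h : |x - y| ≤ ε * y) : |y / x - 1| ≤ 2 * ε := by
  have hεy : ε * y ≤ y / 2 := by nlinarith
  have hx : y ≤ 2 * x := by linarith [neg_abs_le (x - y)]
  have hxpos : 0 < x := by linarith
  rw [div_sub_one hxpos.ne', abs_div, abs_of_pos hxpos, div_le_iff₀ hxpos, abs_sub_comm]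
  nlinarith [abs_nonneg (x - y)]

lemma exists_pos_eventually_abs_sub_le_of_isBigO_sq_sub_sq {α : Type*} {l : Filter α}
    {x y g : α → ℝ} (hx : ∀ᶠ a in l, 0 ≤ x a) (hy : ∀ᶠ a in l, 0 < y a)
    (h : (fun a => x a ^ 2 - y a ^ 2) =O[l] fun a => g a * y a ^ 2) :
    ∃ c > 0, ∀ᶠ a in l, |x a - y a| ≤ c * |g a| * y a := by
  obtain ⟨c, hc, hbound⟩ := h.exists_pos
  refine ⟨c, hc, ?_⟩
  filter_upwards [hbound.bound, hx, hy] with a ha hxa hya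
  refine abs_sub_le_of_abs_sq_sub_sq_le hxa hya ?_
  simpa [abs_of_pos hya, mul_assoc] using ha

/-- A posteriori error estimator: if ‖u − ũ‖_E² = O(h^{2p+2}) + R² with the
residual R of exact order hᵖ (R²/h^{2p} → C₀ > 0), then there is ρ = O(h²),
0 < ρ < 1, such that (1 − ρ)R ≤ ‖u − ũ‖_E ≤ (1 + ρ)R for small h; in
particular the effectivity index R/‖u − ũ‖_E converges to 1 at rate O(h²). -/
theorem stmt18 (p : ℕ) (E R : ℝ → ℝ)
    (hE : ∀ h : ℝ, 0 < h → 0 ≤ E h) (hR : ∀ h : ℝ, 0 < h → 0 ≤ R h)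
    (C₀ : ℝ) (hC₀ : 0 < C₀)
    (hsup : ∃ C : ℝ, ∀ᶠ h in 𝓝[>] (0:ℝ), |(E h)^2 - (R h)^2| ≤ C * h ^ (2*p+2))
    (hconv : Tendsto (fun h => (R h)^2 / h ^ (2*p)) (𝓝[>] (0:ℝ)) (𝓝 C₀)) :
    (∃ ρ : ℝ → ℝ, (ρ =O[𝓝[>] (0:ℝ)] fun h => h^2) ∧
      ∀ᶠ h in 𝓝[>] (0:ℝ), 0 < ρ h ∧ ρ h < 1 ∧
        (1 - ρ h) * R h ≤ E h ∧ E h ≤ (1 + ρ h) * R h) ∧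
    (fun h => R h / E h - 1) =O[𝓝[>] (0:ℝ)] fun h => h^2 := by
  obtain ⟨C, hC⟩ := hsup
  have hpos : ∀ᶠ h in 𝓝[>] (0:ℝ), 0 < h := self_mem_nhdsWithin
  have hdiff : (fun h => (E h)^2 - (R h)^2) =O[𝓝[>] (0:ℝ)] fun h => h ^ (2*p+2) :=
    IsBigO.of_bound C <| by
      filter_upwards [hC, hpos] with h hCh h0
      rwa [Real.norm_eq_abs, Real.norm_eq_abs, abs_of_pos (pow_pos h0 _)]
  have hscale : (fun h : ℝ => h ^ (2*p)) =O[𝓝[>] (0:ℝ)] fun h => (R h)^2 :=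
    isBigO_of_div_tendsto_nhds_of_ne_zero hconv hC₀.ne'
  have hRpos : ∀ᶠ h in 𝓝[>] (0:ℝ), 0 < R h := by
    filter_upwards [hconv.eventually (eventually_gt_nhds hC₀), hpos] with h hquot h0
    exact (hR h h0).lt_of_ne fun hzero => by simp [← hzero] at hquot
  obtain ⟨c, hc, hclose⟩ := exists_pos_eventually_abs_sub_le_of_isBigO_sq_sub_sq
    (hpos.mono hE) hRpos <|
      hdiff.trans <| ((isBigO_refl (fun h : ℝ => h^2) _).mul hscale).congr_left fun h => by ring
  simp only [abs_pow, sq_abs] at hclose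
  have hsmall : ∀ᶠ h in 𝓝[>] (0:ℝ), c * h^2 ≤ 1 / 2 := by
    have : Tendsto (fun h : ℝ => c * h^2) (𝓝[>] 0) (𝓝 0) :=
      (Continuous.tendsto' (by fun_prop) 0 0 (by simp)).mono_left nhdsWithin_le_nhds
    exact this.eventually (eventually_le_nhds (by norm_num))
  refine ⟨⟨fun h => c * h^2, (isBigO_refl _ _).const_mul_left c, ?_⟩, ?_⟩
  · filter_upwards [hclose, hsmall, hpos] with h hclose hsmall h0
    obtain ⟨hlow, hupp⟩ := abs_le.mp hclose
    exact ⟨by positivity, by linarith, by linarith, by linarith⟩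
  · refine IsBigO.of_bound (2 * c) ?_
    filter_upwards [hclose, hsmall, hRpos] with h hclose hsmall hRh
    rw [Real.norm_eq_abs, norm_pow, Real.norm_eq_abs, sq_abs, mul_assoc]
    exact abs_div_sub_one_le_two_mul hRh hsmall hclose
end
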